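/- arXiv:2005.00312 — 2 statements merged into one kernel-verified Lean document; each statement's English description precedes it below -/
import Mathlib

section
/- The function Φ₁(z,τ) is holomorphic on ℂ away from the lattice L_τ = ℤ + ℤτ, and its set of poles is exactly L_τ. -/
/-!
Both products have factors `(1 + a n * e(z)) * (1 + a n * e(-z))` with `e(z) = exp(2πiz)` and
`‖a n‖` geometric in `|q| < 1`, so `w ↦ ∏' n, (1 + a n * w)` is entire and vanishes only where a
factor does. Every zero condition has the form `exp(2πi(z - kτ)) = 1`: `k = 0` for the prefactor
and `k = ∓(n+1)` for the two halves of the `n`-th denominator factor, so the zeros of the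
denominator are exactly `ℤ + ℤτ`. At `z = m + kτ` the terms `q^{n+1/2} e(±z)` of the numerator
have modulus `|q|^{n+1/2±k} ≠ 1`, so the numerator does not vanish there, and the discreteness of
the lattice turns the vanishing denominator into a genuine pole.
-/

open Complex Real

noncomputable section

def qhex (τ : ℂ) : ℂ := Complex.exp ((π : ℂ) * I * τ)

def qex (τ : ℂ) : ℂ := Complex.exp (2 * (π : ℂ) * I * τ)

def phiNumF (τ z : ℂ) (n : ℕ) : ℂ :=
  (1 + qhex τ ^ (2 * n + 1) * Complex.exp (2 * (π : ℂ) * I * z)) *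
    (1 + qhex τ ^ (2 * n + 1) * Complex.exp (-(2 * (π : ℂ) * I * z)))

def phiDenF (τ z : ℂ) (n : ℕ) : ℂ :=
  (1 - qex τ ^ (n + 1) * Complex.exp (2 * (π : ℂ) * I * z)) *
    (1 - qex τ ^ (n + 1) * Complex.exp (-(2 * (π : ℂ) * I * z)))

def Phi1 (τ z : ℂ) : ℂ :=
  (Complex.exp (-((π : ℂ) * I * z)) - Complex.exp ((π : ℂ) * I * z))⁻¹ *
    ((∏' n : ℕ, phiNumF τ z n) / (∏' n : ℕ, phiDenF τ z n))

def lattice (τ : ℂ) : Set ℂ := {z : ℂ | ∃ m n : ℤ, z = (m : ℂ) + (n : ℂ) * τ}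

open Filter Topology

section InfiniteProduct

variable {a : ℕ → ℂ}

lemma multipliable_one_add_mul (ha : Summable fun n => ‖a n‖) (w : ℂ) :
    Multipliable fun n => 1 + a n * w :=
  multipliable_one_add_of_summable <| by simpa [norm_mul] using ha.mul_right ‖w‖

lemma differentiable_tprod_one_add_mul (ha : Summable fun n => ‖a n‖) :
    Differentiable ℂ fun w => ∏' n, (1 + a n * w) := by
  intro w₀
  have hbound : ∀ n, ∀ w ∈ Metric.ball w₀ 1, ‖a n * w‖ ≤ ‖a n‖ * (‖w₀‖ + 1) := by
    intro n w hw
    rw [norm_mul]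
    refine mul_le_mul_of_nonneg_left ?_ (norm_nonneg _)
    have := norm_le_norm_add_norm_sub' w w₀
    rw [Metric.mem_ball, dist_eq_norm] at hw
    linarith
  have hprod := (ha.mul_right (‖w₀‖ + 1)).hasProdLocallyUniformlyOn_nat_one_add
    Metric.isOpen_ball (.of_forall hbound) (fun n => by fun_prop)
  refine (hprod.differentiableOn (.of_forall fun s => ?_) Metric.isOpen_ball).differentiableAt
    (Metric.ball_mem_nhds w₀ one_pos)
  simpa [Finset.prod_fn] using DifferentiableOn.finsetProd (fun n _ => by fun_prop)

lemma tprod_one_add_mul_ne_zero (ha : Summable fun n => ‖a n‖) {w : ℂ}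
    (hw : ∀ n, 1 + a n * w ≠ 0) : ∏' n, (1 + a n * w) ≠ 0 :=
  tprod_one_add_ne_zero_of_summable hw <| by simpa [norm_mul] using ha.mul_right ‖w‖

lemma tprod_one_add_mul_mul_one_add_mul (ha : Summable fun n => ‖a n‖) (u v : ℂ) :
    ∏' n, (1 + a n * u) * (1 + a n * v) = (∏' n, (1 + a n * u)) * ∏' n, (1 + a n * v) :=
  (multipliable_one_add_mul ha u).tprod_mul (multipliable_one_add_mul ha v)

lemma differentiable_tprod_one_add_mul_mul_one_add_mul (ha : Summable fun n => ‖a n‖)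
    {f g : ℂ → ℂ} (hf : Differentiable ℂ f) (hg : Differentiable ℂ g) :
    Differentiable ℂ fun z => ∏' n, (1 + a n * f z) * (1 + a n * g z) := by
  simp_rw [tprod_one_add_mul_mul_one_add_mul ha]
  exact ((differentiable_tprod_one_add_mul ha).comp hf).mul
    ((differentiable_tprod_one_add_mul ha).comp hg)

lemma tprod_one_add_mul_mul_one_add_mul_ne_zero (ha : Summable fun n => ‖a n‖) {u v : ℂ}
    (h : ∀ n, (1 + a n * u) * (1 + a n * v) ≠ 0) :
    ∏' n, (1 + a n * u) * (1 + a n * v) ≠ 0 := by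
  rw [tprod_one_add_mul_mul_one_add_mul ha]
  exact mul_ne_zero (tprod_one_add_mul_ne_zero ha fun n => left_ne_zero_of_mul (h n))
    (tprod_one_add_mul_ne_zero ha fun n => right_ne_zero_of_mul (h n))

end InfiniteProduct

lemma tendsto_norm_div_atTop_of_eq_zero {X 𝕜 : Type*} [TopologicalSpace X]
    [NormedDivisionRing 𝕜] {f g : X → 𝕜} {z₀ : X} (hf : ContinuousAt f z₀)
    (hf₀ : f z₀ = 0) (hf_ne : ∀ᶠ z in 𝓝[≠] z₀, f z ≠ 0) (hg : ContinuousAt g z₀)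
    (hg₀ : g z₀ ≠ 0) :
    Tendsto (fun z => ‖g z / f z‖) (𝓝[≠] z₀) atTop := by
  have hf' : Tendsto f (𝓝[≠] z₀) (𝓝[≠] 0) :=
    tendsto_nhdsWithin_iff.2 ⟨hf₀ ▸ hf.tendsto.mono_left nhdsWithin_le_nhds, hf_ne⟩
  simpa [div_eq_mul_inv] using (hg.norm.tendsto.mono_left nhdsWithin_le_nhds).pos_mul_atTop
    (norm_pos_iff.2 hg₀) (tendsto_norm_inv_nhdsNE_zero_atTop.comp hf')

lemma cexp_two_pi_I_mul_eq_one_iff {w : ℂ} : cexp (2 * π * I * w) = 1 ↔ ∃ m : ℤ, w = m := by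
  rw [Complex.exp_eq_one_iff]
  refine exists_congr fun m => ⟨fun h => ?_, fun h => by rw [h]; ring⟩
  have : (2 * π * I : ℂ) ≠ 0 := by simp [Real.pi_ne_zero, I_ne_zero]
  exact mul_left_cancel₀ this (by linear_combination h)

lemma mem_lattice_iff_exists_cexp_eq_one {τ z : ℂ} :
    z ∈ lattice τ ↔ ∃ k : ℤ, cexp (2 * π * I * (z - k * τ)) = 1 := by
  simp only [_root_.lattice, Set.mem_ofPred_eq, cexp_two_pi_I_mul_eq_one_iff, sub_eq_iff_eq_add]
  exact exists_comm

lemma cexp_neg_sub_cexp_eq_zero_iff (z : ℂ) :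
    cexp (-(π * I * z)) - cexp (π * I * z) = 0 ↔ cexp (2 * π * I * z) = 1 := by
  rw [sub_eq_zero, Complex.exp_eq_exp_iff_exp_sub_eq_one,
    show -(π * I * z) - π * I * z = -(2 * π * I * z) by ring, Complex.exp_neg, inv_eq_one]

lemma qex_pow_mul_cexp (τ w : ℂ) (k : ℕ) :
    qex τ ^ k * cexp (2 * π * I * w) = cexp (2 * π * I * (w + k * τ)) := by
  rw [qex, ← Complex.exp_nat_mul, ← Complex.exp_add]
  ring_nf

lemma phiDenF_eq_zero_iff (τ z : ℂ) (n : ℕ) :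
    phiDenF τ z n = 0 ↔
      cexp (2 * π * I * (z + (n + 1) * τ)) = 1 ∨ cexp (2 * π * I * (z - (n + 1) * τ)) = 1 := by
  have hneg : cexp (-(2 * π * I * z)) = cexp (2 * π * I * (-z)) := by ring_nf
  have hplus : 1 - qex τ ^ (n + 1) * cexp (2 * π * I * z) = 0 ↔
      cexp (2 * π * I * (z + (n + 1) * τ)) = 1 := by
    rw [sub_eq_zero, eq_comm, qex_pow_mul_cexp]
    push_cast
    rfl
  have hminus : 1 - qex τ ^ (n + 1) * cexp (-(2 * π * I * z)) = 0 ↔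
      cexp (2 * π * I * (z - (n + 1) * τ)) = 1 := by
    rw [sub_eq_zero, eq_comm, hneg, qex_pow_mul_cexp, ← inv_eq_one, ← Complex.exp_neg]
    push_cast
    ring_nf
  rw [phiDenF, mul_eq_zero, hplus, hminus]

lemma zero_set_eq_lattice (τ : ℂ) :
    {z : ℂ | cexp (-(π * I * z)) - cexp (π * I * z) = 0 ∨ ∃ n : ℕ, phiDenF τ z n = 0} =
      lattice τ := by
  ext z
  simp only [Set.mem_ofPred_eq, mem_lattice_iff_exists_cexp_eq_one, cexp_neg_sub_cexp_eq_zero_iff,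
    phiDenF_eq_zero_iff]
  constructor
  · rintro (h | ⟨n, h | h⟩)
    · exact ⟨0, by simpa using h⟩
    · exact ⟨-(n + 1), by convert h using 4; push_cast; ring⟩
    · exact ⟨n + 1, by push_cast; simpa using h⟩
  · rintro ⟨k, hk⟩
    obtain ⟨n, rfl | rfl⟩ := Int.eq_nat_or_neg k
    · rcases n with _ | n
      · exact Or.inl (by simpa using hk)
      · exact Or.inr ⟨n, Or.inr (by push_cast at hk; exact hk)⟩
    · rcases n with _ | n
      · exact Or.inl (by simpa using hk)
      · exact Or.inr ⟨n, Or.inl (by convert hk using 4; push_cast; ring)⟩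

lemma norm_qhex_pow_mul_cexp (τ w : ℂ) (n : ℕ) :
    ‖qhex τ ^ n * cexp (2 * π * I * w)‖ = Real.exp (-π * (n * τ.im + 2 * w.im)) := by
  rw [qhex, ← Complex.exp_nat_mul, ← Complex.exp_add, Complex.norm_exp]
  congr 1
  simp only [add_re, mul_re, mul_im, natCast_re, natCast_im, ofReal_re, ofReal_im, I_re, I_im,
    re_ofNat, im_ofNat]
  ring

lemma one_add_qhex_pow_mul_cexp_ne_zero {τ : ℂ} (hτ : 0 < τ.im) (n : ℕ) (k : ℤ) {w : ℂ}
    (hw : w.im = k * τ.im) : 1 + qhex τ ^ (2 * n + 1) * cexp (2 * π * I * w) ≠ 0 := by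
  intro h
  have hnorm : ‖qhex τ ^ (2 * n + 1) * cexp (2 * π * I * w)‖ = 1 := by
    rw [eq_neg_of_add_eq_zero_right h, norm_neg, norm_one]
  have hodd : ((2 * n + 1 + 2 * k : ℤ) : ℝ) ≠ 0 := by exact_mod_cast (by omega)
  rw [norm_qhex_pow_mul_cexp, Real.exp_eq_one_iff, hw] at hnorm
  refine mul_ne_zero (mul_ne_zero (neg_ne_zero.2 Real.pi_ne_zero) hτ.ne') hodd ?_
  push_cast at hnorm ⊢
  linear_combination hnorm

lemma phiNumF_ne_zero_of_mem_lattice {τ z : ℂ} (hτ : 0 < τ.im) (hz : z ∈ lattice τ) (n : ℕ) :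
    phiNumF τ z n ≠ 0 := by
  obtain ⟨m, k, rfl⟩ := hz
  refine mul_ne_zero (one_add_qhex_pow_mul_cexp_ne_zero hτ n k (by simp)) ?_
  rw [← mul_neg]
  exact one_add_qhex_pow_mul_cexp_ne_zero hτ n (-k) (by simp)

lemma norm_qhex_lt_one {τ : ℂ} (hτ : 0 < τ.im) : ‖qhex τ‖ < 1 := by
  rw [qhex, Complex.norm_exp, Real.exp_lt_one_iff]
  simpa using mul_pos Real.pi_pos hτ

lemma qex_eq_qhex_sq (τ : ℂ) : qex τ = qhex τ ^ 2 := by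
  rw [qex, qhex, ← Complex.exp_nat_mul]
  ring_nf

lemma summable_norm_qhex_pow_odd {τ : ℂ} (hτ : 0 < τ.im) :
    Summable fun n : ℕ => ‖qhex τ ^ (2 * n + 1)‖ := by
  have hq := norm_qhex_lt_one hτ
  have hgeom := (summable_geometric_of_lt_one (by positivity)
    (pow_lt_one₀ (norm_nonneg _) hq two_ne_zero)).mul_left ‖qhex τ‖
  refine hgeom.congr fun n => ?_
  simp only [norm_pow, ← pow_mul, ← pow_succ']

lemma summable_norm_neg_qex_pow_succ {τ : ℂ} (hτ : 0 < τ.im) :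
    Summable fun n : ℕ => ‖-qex τ ^ (n + 1)‖ := by
  have hq : ‖qex τ‖ < 1 := by
    rw [qex_eq_qhex_sq, norm_pow]
    exact pow_lt_one₀ (norm_nonneg _) (norm_qhex_lt_one hτ) two_ne_zero
  simpa [norm_pow] using
    (summable_nat_add_iff 1).2 (summable_geometric_of_lt_one (norm_nonneg _) hq)

lemma phiDenF_eq (τ z : ℂ) (n : ℕ) :
    phiDenF τ z n = (1 + -qex τ ^ (n + 1) * cexp (2 * π * I * z)) *
      (1 + -qex τ ^ (n + 1) * cexp (-(2 * π * I * z))) := by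
  simp only [phiDenF, neg_mul, ← sub_eq_add_neg]

lemma differentiable_tprod_phiNumF {τ : ℂ} (hτ : 0 < τ.im) :
    Differentiable ℂ fun z => ∏' n, phiNumF τ z n :=
  differentiable_tprod_one_add_mul_mul_one_add_mul (summable_norm_qhex_pow_odd hτ)
    (by fun_prop) (by fun_prop)

lemma differentiable_tprod_phiDenF {τ : ℂ} (hτ : 0 < τ.im) :
    Differentiable ℂ fun z => ∏' n, phiDenF τ z n := by
  simp_rw [phiDenF_eq]
  exact differentiable_tprod_one_add_mul_mul_one_add_mul (summable_norm_neg_qex_pow_succ hτ)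
    (by fun_prop) (by fun_prop)

lemma tprod_phiNumF_ne_zero {τ z : ℂ} (hτ : 0 < τ.im) (h : ∀ n, phiNumF τ z n ≠ 0) :
    ∏' n, phiNumF τ z n ≠ 0 :=
  tprod_one_add_mul_mul_one_add_mul_ne_zero (summable_norm_qhex_pow_odd hτ) h

lemma tprod_phiDenF_ne_zero {τ z : ℂ} (hτ : 0 < τ.im) (h : ∀ n, phiDenF τ z n ≠ 0) :
    ∏' n, phiDenF τ z n ≠ 0 := by
  simp_rw [phiDenF_eq] at h ⊢
  exact tprod_one_add_mul_mul_one_add_mul_ne_zero (summable_norm_neg_qex_pow_succ hτ) h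

lemma linearIndependent_one_of_im_pos {τ : ℂ} (hτ : 0 < τ.im) : LinearIndependent ℝ ![1, τ] := by
  refine LinearIndependent.pair_iff.2 fun s t h => ?_
  have ht : t = 0 := by simpa [hτ.ne'] using congrArg Complex.im h
  subst ht
  simpa using h

lemma eventually_notMem_lattice {τ : ℂ} (hτ : 0 < τ.im) (z₀ : ℂ) :
    ∀ᶠ z in 𝓝[≠] z₀, z ∉ lattice τ := by
  let L : PeriodPair := ⟨1, τ, linearIndependent_one_of_im_pos hτ⟩
  have hL : lattice τ = L.lattice := by
    ext z
    simp [_root_.lattice, PeriodPair.mem_lattice, L, eq_comm]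
  filter_upwards [nhdsWithin_le_nhds (L.compl_lattice_sdiff_singleton_mem_nhds z₀),
    self_mem_nhdsWithin] with z hz hne
  rw [hL]
  exact fun hmem => hne (by simpa [hmem] using hz)

theorem Phi1_holomorphic_off_lattice_and_poles_eq_lattice (τ : ℂ) (hτ : 0 < τ.im) :
    (∀ z ∉ lattice τ, DifferentiableAt ℂ (Phi1 τ) z) ∧
    (∀ z ∈ lattice τ,
      Filter.Tendsto (fun w => ‖Phi1 τ w‖) (nhdsWithin z {z}ᶜ) Filter.atTop) ∧
    ({z : ℂ | Complex.exp (-((π : ℂ) * I * z)) - Complex.exp ((π : ℂ) * I * z) = 0 ∨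
        ∃ n : ℕ, phiDenF τ z n = 0} = lattice τ) ∧
    (∀ z ∈ lattice τ, ∀ n : ℕ, phiNumF τ z n ≠ 0) := by
  set pre : ℂ → ℂ := fun z => cexp (-(π * I * z)) - cexp (π * I * z)
  have hPre : Differentiable ℂ pre := by fun_prop
  have hNum := differentiable_tprod_phiNumF hτ
  have hDen := differentiable_tprod_phiDenF hτ
  have hPhi : Phi1 τ = fun z => (∏' n, phiNumF τ z n) / (pre z * ∏' n, phiDenF τ z n) := by
    funext z
    simp only [Phi1, pre, div_eq_mul_inv, mul_inv]
    ring
  have hzero_iff (z : ℂ) : z ∈ lattice τ ↔ pre z = 0 ∨ ∃ n, phiDenF τ z n = 0 := by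
    rw [← zero_set_eq_lattice]
    rfl
  have hdenom_ne (z : ℂ) (hz : z ∉ lattice τ) : pre z * ∏' n, phiDenF τ z n ≠ 0 := by
    simp only [hzero_iff, not_or, not_exists] at hz
    exact mul_ne_zero hz.1 (tprod_phiDenF_ne_zero hτ hz.2)
  refine ⟨fun z hz => ?_, fun z hz => ?_, zero_set_eq_lattice τ,
    fun z hz => phiNumF_ne_zero_of_mem_lattice hτ hz⟩
  · rw [hPhi]
    exact (hNum z).div ((hPre.mul hDen) z) (hdenom_ne z hz)
  · have hdenom_zero : pre z * ∏' n, phiDenF τ z n = 0 := by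
      rcases (hzero_iff z).1 hz with h | h
      · rw [h, zero_mul]
      · rw [tprod_of_exists_eq_zero h, mul_zero]
    rw [hPhi]
    exact tendsto_norm_div_atTop_of_eq_zero (hPre.mul hDen).continuous.continuousAt hdenom_zero
      ((eventually_notMem_lattice hτ z).mono hdenom_ne) hNum.continuous.continuousAt
      (tprod_phiNumF_ne_zero hτ (phiNumF_ne_zero_of_mem_lattice hτ hz))

end
end

section
/- Let N be an even-dimensional Euclidean space, ζ ∈ SO(N) with ζ^k = Id_N and Id_N - ζ invertible, o_N an orientation on N, and let ζ̂ be the unique lift of ζ to Spin(N) such that the orientation determined by the top symbol term of σ(ζ̂) ∈ ΛN coincides with o_N. Suppose J ∈ so(N) commutes with ζ, exp(J/k) = ζ in SO(N). If N is 2-dimensional with J e₁ = 2πa e₂, J e₂ = -2πa e₁ (a ∈ {1,…,k-1}) and o_N = e₁∧e₂, then ζ̂^k = (-1)^a, Os(J/k, o_N) = 1, and Os(J/k,o_N)^k · ε(J,N) = ζ̂^k. -/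
/-! Since `E1 * E2 = diag (-i, i)`, exponentiating it entrywise gives
`exp (θ • E1 * E2) = cos θ + sin θ • E1 * E2`. This identifies `zetaHat a k` with the spin
exponential at `θ = π a / k`, and its `k`-th power with the exponential at `θ = π a`, which is
`cos (π a) = (-1) ^ a`. For `0 < a < k` the angle `π a / k` lies in `(0, π)`, so the top symbol
coefficient `sin (π a / k)` is positive and the orientation sign is `1`. -/

open Complex Matrix

noncomputable section

def E1 : Matrix (Fin 2) (Fin 2) ℂ := !![0, I; I, 0]

def E2 : Matrix (Fin 2) (Fin 2) ℂ := !![0, 1; -1, 0]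

/-- `ζ̂ = exp_{Spin}(J/k) = cos(πa/k) + sin(πa/k)·e₁e₂`. -/
def zetaHat (a k : ℕ) : Matrix (Fin 2) (Fin 2) ℂ :=
  (Real.cos (Real.pi * a / k) : ℂ) • (1 : Matrix (Fin 2) (Fin 2) ℂ) +
    (Real.sin (Real.pi * a / k) : ℂ) • (E1 * E2)

/-- The orientation sign `Os`: +1 if the top symbol coefficient (here sin(πa/k)) is
positive, i.e. the orientation determined by ζ̂ agrees with o_N; -1 otherwise. -/
def osSign (s : ℝ) : ℂ := if 0 < s then 1 else -1

theorem E1_mul_E2 : E1 * E2 = diagonal ![-I, I] := by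
  ext i j
  fin_cases i <;> fin_cases j <;> simp [E1, E2, Matrix.mul_apply, Fin.sum_univ_two]

theorem exp_real_smul_E1_mul_E2 (θ : ℝ) :
    NormedSpace.exp ((θ : ℂ) • (E1 * E2)) =
      (Real.cos θ : ℂ) • (1 : Matrix (Fin 2) (Fin 2) ℂ) + (Real.sin θ : ℂ) • (E1 * E2) := by
  have hexp : NormedSpace.exp ((θ : ℂ) • (E1 * E2)) =
      diagonal ![cexp (-(θ * I)), cexp (θ * I)] := by
    rw [E1_mul_E2, ← diagonal_smul, exp_diagonal]
    congr 1
    funext i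
    fin_cases i <;> simp [← Complex.exp_eq_exp_ℂ]
  rw [hexp, E1_mul_E2, ← diagonal_one, ← diagonal_smul, ← diagonal_smul, diagonal_add]
  congr 1
  funext i
  fin_cases i <;> simp [← neg_mul, Complex.exp_mul_I]

theorem zetaHat_eq_exp (a k : ℕ) :
    zetaHat a k = NormedSpace.exp (((Real.pi * a / k : ℝ) : ℂ) • (E1 * E2)) :=
  (exp_real_smul_E1_mul_E2 _).symm

theorem zetaHat_pow_self (a : ℕ) {k : ℕ} (hk : k ≠ 0) :
    zetaHat a k ^ k = (-1 : ℂ) ^ a • (1 : Matrix (Fin 2) (Fin 2) ℂ) := by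
  have hangle : (k : ℂ) * ((Real.pi * a / k : ℝ) : ℂ) = ((a * Real.pi : ℝ) : ℂ) := by
    push_cast
    field_simp
  rw [zetaHat_eq_exp, ← Matrix.exp_nsmul, ← Nat.cast_smul_eq_nsmul ℂ, smul_smul, hangle,
    exp_real_smul_E1_mul_E2, Real.cos_nat_mul_pi, Real.sin_nat_mul_pi]
  simp

theorem Real.sin_pi_mul_div_pos {a k : ℝ} (ha : 0 < a) (hak : a < k) :
    0 < Real.sin (Real.pi * a / k) := by
  have hk : 0 < k := ha.trans hak
  apply Real.sin_pos_of_pos_of_lt_pi (by positivity)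
  rw [div_lt_iff₀ hk]
  exact mul_lt_mul_of_pos_left hak Real.pi_pos

theorem osSign_of_pos {s : ℝ} (hs : 0 < s) : osSign s = 1 :=
  if_pos hs

theorem spin_lift_two_dim_general (a k : ℕ) (ha : 1 ≤ a) (hak : a ≤ k - 1) :
    zetaHat a k = NormedSpace.exp (((Real.pi * a / k : ℝ) : ℂ) • (E1 * E2)) ∧
    zetaHat a k ^ k = (-1 : ℂ) ^ a • (1 : Matrix (Fin 2) (Fin 2) ℂ) ∧
    osSign (Real.sin (Real.pi * a / k)) = 1 ∧
    (osSign (Real.sin (Real.pi * a / k)) ^ k * (-1 : ℂ) ^ a) •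
        (1 : Matrix (Fin 2) (Fin 2) ℂ) = zetaHat a k ^ k := by
  have hak' : a < k := by omega
  have hpow := zetaHat_pow_self a (by omega : k ≠ 0)
  have hsign : osSign (Real.sin (Real.pi * a / k)) = 1 :=
    osSign_of_pos (Real.sin_pi_mul_div_pos (by exact_mod_cast ha) (by exact_mod_cast hak'))
  refine ⟨zetaHat_eq_exp a k, hpow, hsign, ?_⟩
  rw [hsign, hpow, one_pow, one_mul]

theorem spin_lift_two_dim (a k : ℕ) (ha : 1 ≤ a) (hak : a ≤ k - 1) (hk : 2 ≤ k) :
    zetaHat a k = NormedSpace.exp (((Real.pi * a / k : ℝ) : ℂ) • (E1 * E2)) ∧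
    zetaHat a k ^ k = (-1 : ℂ) ^ a • (1 : Matrix (Fin 2) (Fin 2) ℂ) ∧
    osSign (Real.sin (Real.pi * a / k)) = 1 ∧
    (osSign (Real.sin (Real.pi * a / k)) ^ k * (-1 : ℂ) ^ a) •
        (1 : Matrix (Fin 2) (Fin 2) ℂ) = zetaHat a k ^ k :=
  spin_lift_two_dim_general a k ha hak

end
end
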